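/- Let d ≥ 2 and ℓ > 0 with t_0 = ℓ√((d+1)/(2d)) and r = ℓ√((d-1)/(2d)). Suppose u = C + t_i·w and v = C - t_j·w with t_i, t_j ≥ t_0 for a unit vector w, and X_1 satisfies ‖X_1 - C‖ = r with X_1 - C orthogonal to w. Then ‖u - v‖ ≥ max(‖u - X_1‖, ‖v - X_1‖). -/

import Mathlib

/-! Both `u - X1` and `v - X1` split into orthogonal parts along `w` and `X1 - C`, so by
Pythagoras `‖u - X1‖² = tᵢ² + r²` and `‖v - X1‖² = tⱼ² + r²`, while `‖u - v‖ = tᵢ + tⱼ`.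
Since `r ≤ t₀` (compare `d - 1` with `d + 1`), `r² ≤ tⱼ²` and `r² ≤ tᵢ²`, and
`tᵢ² + tⱼ² ≤ (tᵢ + tⱼ)²`. -/

open RealInnerProductSpace

theorem norm_smul_sub_le_of_inner_eq_zero {V : Type*} [NormedAddCommGroup V]
    [InnerProductSpace ℝ V] {w x : V} (hw : ‖w‖ = 1) (hxw : ⟪x, w⟫ = 0) (s : ℝ) {t : ℝ}
    (ht : ‖x‖ ≤ |t|) : ‖s • w - x‖ ≤ |s| + |t| := by
  have hpyth : ‖s • w - x‖ ^ 2 = s ^ 2 + ‖x‖ ^ 2 := by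
    have h : ⟪s • w, x⟫ = 0 := by rw [inner_smul_left, real_inner_comm, hxw, mul_zero]
    rw [sq, sq, norm_sub_sq_eq_norm_sq_add_norm_sq_real h, norm_smul, hw, mul_one,
      Real.norm_eq_abs, abs_mul_abs_self, sq]
  refine le_of_pow_le_pow_left₀ two_ne_zero (by positivity) ?_
  calc ‖s • w - x‖ ^ 2 = s ^ 2 + ‖x‖ ^ 2 := hpyth
    _ ≤ |s| ^ 2 + |t| ^ 2 := by rw [sq_abs]; gcongr
    _ ≤ (|s| + |t|) ^ 2 := by nlinarith [abs_nonneg s, abs_nonneg t]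

theorem stmt_14_general {V : Type*} [NormedAddCommGroup V] [InnerProductSpace ℝ V]
    (d : ℕ) (ℓ : ℝ) (hℓ : 0 < ℓ)
    (t0 r : ℝ) (ht0 : t0 = ℓ * Real.sqrt ((d + 1) / (2*d)))
    (hr : r = ℓ * Real.sqrt (((d:ℝ) - 1) / (2*d)))
    (C X1 u v : V) (w : V) (hw : ‖w‖ = 1)
    (horth : inner ℝ (X1 - C) w = (0:ℝ)) (hX1 : ‖X1 - C‖ = r)
    (ti tj : ℝ) (hti : t0 ≤ ti) (htj : t0 ≤ tj)
    (hu : u = C + ti • w) (hv : v = C - tj • w) :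
    ‖u - v‖ ≥ max ‖u - X1‖ ‖v - X1‖ := by
  have ht0_nonneg : 0 ≤ t0 := by rw [ht0]; positivity
  have hr_le_t0 : r ≤ t0 := by
    rw [hr, ht0]
    gcongr
    linarith
  have hX1_le (t : ℝ) (h : t0 ≤ t) : ‖X1 - C‖ ≤ |t| :=
    hX1 ▸ hr_le_t0.trans (h.trans (le_abs_self t))
  have huv : ‖u - v‖ = |ti| + |tj| := by
    rw [hu, hv, show C + ti • w - (C - tj • w) = (ti + tj) • w by module, norm_smul, hw,
      mul_one, Real.norm_eq_abs, abs_of_nonneg (by linarith), abs_of_nonneg (by linarith),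
      abs_of_nonneg (by linarith)]
  refine max_le ?_ ?_
  · rw [huv, show u - X1 = ti • w - (X1 - C) by rw [hu]; abel]
    exact norm_smul_sub_le_of_inner_eq_zero hw horth ti (hX1_le tj htj)
  · rw [huv, add_comm, show v - X1 = (-tj) • w - (X1 - C) by rw [hv]; module, ← abs_neg tj]
    exact norm_smul_sub_le_of_inner_eq_zero hw horth (-tj) (hX1_le ti hti)

theorem stmt_14 {V : Type*} [NormedAddCommGroup V] [InnerProductSpace ℝ V]
    (d : ℕ) (hd : 2 ≤ d) (ℓ : ℝ) (hℓ : 0 < ℓ)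
    (t0 r : ℝ) (ht0 : t0 = ℓ * Real.sqrt ((d + 1) / (2*d)))
    (hr : r = ℓ * Real.sqrt (((d:ℝ) - 1) / (2*d)))
    (C X1 u v : V) (w : V) (hw : ‖w‖ = 1)
    (horth : inner ℝ (X1 - C) w = (0:ℝ)) (hX1 : ‖X1 - C‖ = r)
    (ti tj : ℝ) (hti : t0 ≤ ti) (htj : t0 ≤ tj)
    (hu : u = C + ti • w) (hv : v = C - tj • w) :
    ‖u - v‖ ≥ max ‖u - X1‖ ‖v - X1‖ :=
  stmt_14_general d ℓ hℓ t0 r ht0 hr C X1 u v w hw horth hX1 ti tj hti htj hu hv
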